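/- arXiv:1605.07219 — 2 statements merged into one kernel-verified Lean document; each statement's English description precedes it below -/
import Mathlib

section
/- Let (u,v) be a finite-energy radial solution, i.e. a solution of the radial system with ∫₀^∞ t e^{u} dt, ∫₀^∞ t e^{v} dt, ∫₀^∞ t e^{u+v} dt all finite, and suppose ru'(r) → -2β₁ and rv'(r) → -2β₂ as r → ∞ with r²(e^{u+v} + e^v + e^u) → 0. Then 2∫₀^∞ t e^{u(t)+v(t)} dt = 4(N₁+1)(N₂+1) - 4(β₁-1)(β₂-1), 2∫₀^∞ t e^{u(t)} dt = 4N₁(N₂+1) - 4β₁(β₂-1), and 2∫₀^∞ t e^{v(t)} dt = 4β₂(β₁-1) - 4N₂(N₁+1). -/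
/-!
Integrating the equations once: by the logarithmic behaviour at the origin, the flux `r u'`
runs from `2N₁` at `0` to `-2β₁` at `∞` (and `r v'` from `2N₂` to `-2β₂`), so
`∫ r e^v (e^u + 1) = 2N₁ + 2β₁` and `∫ r e^u (e^v - 1) = 2N₂ + 2β₂`. The third relation is the
Pohozaev identity: `P = (r u')(r v') + r² (e^{u+v} + e^v - e^u)` satisfies
`P' = 2r (e^{u+v} + e^v - e^u)`, and `P` runs from `4N₁N₂` to `4β₁β₂` because `r² e^{…}` vanishes
at both ends. The three linear relations determine the three integrals.
-/

open MeasureTheory Real Filter Set Topology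

theorem nonpos_of_tendsto_deriv_atBot_of_abs_le {f f' : ℝ → ℝ} {L C : ℝ}
    (hf : ∀ᶠ t in atBot, HasDerivAt f (f' t) t) (hL : Tendsto f' atBot (𝓝 L))
    (hC : ∀ᶠ t in atBot, |f t| ≤ C) : L ≤ 0 := by
  by_contra! hL0
  obtain ⟨a, ha⟩ := eventually_atBot.mp
    (hf.and ((hL.eventually (lt_mem_nhds (half_lt_self hL0))).and hC))
  have hC0 : 0 ≤ C := (abs_nonneg _).trans (ha a le_rfl).2.2
  set t := a - (4 * C / L + 1)
  have hta : t ≤ a := by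
    have : 0 ≤ 4 * C / L := by positivity
    linarith
  have hgrowth : L / 2 * (a - t) ≤ f a - f t := by
    refine (convex_Icc t a).mul_sub_le_image_sub_of_le_deriv ?_ ?_ ?_ t ⟨le_rfl, hta⟩ a
      ⟨hta, le_rfl⟩ hta
    · exact fun x hx => (ha x hx.2).1.continuousAt.continuousWithinAt
    · rw [interior_Icc]
      exact fun x hx => (ha x hx.2.le).1.differentiableAt.differentiableWithinAt
    · rw [interior_Icc]
      exact fun x hx => ((ha x hx.2.le).1.deriv ▸ (ha x hx.2.le).2.1).le
  have hdiff : L / 2 * (a - t) = 2 * C + L / 2 := by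
    simp only [t]; field_simp; ring
  have := abs_le.mp (ha a le_rfl).2.2
  have := abs_le.mp (ha t hta).2.2
  linarith

theorem eq_zero_of_tendsto_deriv_atBot_of_abs_le {f f' : ℝ → ℝ} {L C : ℝ}
    (hf : ∀ᶠ t in atBot, HasDerivAt f (f' t) t) (hL : Tendsto f' atBot (𝓝 L))
    (hC : ∀ᶠ t in atBot, |f t| ≤ C) : L = 0 := by
  refine le_antisymm (nonpos_of_tendsto_deriv_atBot_of_abs_le hf hL hC) ?_
  have := nonpos_of_tendsto_deriv_atBot_of_abs_le (f := -f) (hf.mono fun t ht => ht.neg) hL.neg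
    (hC.mono fun t ht => by rwa [Pi.neg_apply, abs_neg])
  linarith

-- In the variable `t = log r`, `φ - N t` is bounded and its derivative tends to `L - N`.
theorem eq_of_tendsto_mul_deriv_of_abs_sub_mul_log_le {φ φ' : ℝ → ℝ} {L N C : ℝ}
    (hφ : ∀ᶠ r in 𝓝[>] 0, HasDerivAt φ (φ' r) r)
    (hC : ∀ᶠ r in 𝓝[>] 0, |φ r - N * log r| ≤ C)
    (hL : Tendsto (fun r => r * φ' r) (𝓝[>] 0) (𝓝 L)) : L = N := by
  have hderiv : ∀ᶠ t in atBot,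
      HasDerivAt (fun t => φ (exp t) - N * t) (exp t * φ' (exp t) - N) t :=
    (tendsto_exp_atBot_nhdsGT.eventually hφ).mono fun t ht =>
      ((ht.comp t (hasDerivAt_exp t)).sub ((hasDerivAt_id' t).const_mul N)).congr_deriv
        (by ring)
  have hbound : ∀ᶠ t in atBot, |φ (exp t) - N * t| ≤ C :=
    (tendsto_exp_atBot_nhdsGT.eventually hC).mono fun t ht => by rwa [log_exp] at ht
  linarith [eq_zero_of_tendsto_deriv_atBot_of_abs_le hderiv
    ((hL.comp tendsto_exp_atBot_nhdsGT).sub_const N) hbound]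

theorem tendsto_nhdsGT_zero_of_hasDerivAt_of_integrableOn {F f : ℝ → ℝ} {b : ℝ}
    (hF : ∀ x > 0, HasDerivAt F (f x) x) (hf : IntegrableOn f (Ioi 0))
    (hb : Tendsto F atTop (𝓝 b)) :
    Tendsto F (𝓝[>] 0) (𝓝 (b - ∫ x in Ioi 0, f x)) := by
  have htail : Tendsto (fun x => ∫ y in Ioi x, f y) (𝓝[>] 0) (𝓝 (∫ x in Ioi 0, f x)) := by
    refine ((aecover_Ioi_of_Ioi (μ := volume) (tendsto_nhdsWithin_of_tendsto_nhds
      tendsto_id)).integral_tendsto_of_countably_generated hf).congr' ?_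
    filter_upwards [self_mem_nhdsWithin] with x hx
    rw [Measure.restrict_restrict measurableSet_Ioi,
      inter_eq_left.mpr (Ioi_subset_Ioi (le_of_lt hx))]
    rfl
  refine (tendsto_const_nhds.sub htail).congr' ?_
  filter_upwards [self_mem_nhdsWithin] with x (hx : 0 < x)
  rw [integral_Ioi_of_hasDerivAt_of_tendsto (hF x hx).continuousAt.continuousWithinAt
    (fun y hy => hF y (hx.trans hy)) (hf.mono_set (Ioi_subset_Ioi hx.le)) hb]
  ring

section
variable {n : WithTop ℕ∞} {φ : ℝ → ℝ} {s : Set ℝ} {r : ℝ}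

theorem ContDiffOn.hasDerivAt_deriv (hφ : ContDiffOn ℝ n φ s) (hn : n ≠ 0) (hs : IsOpen s)
    (hr : r ∈ s) : HasDerivAt φ (deriv φ r) r :=
  ((hφ.differentiableOn hn).differentiableAt (hs.mem_nhds hr)).hasDerivAt

theorem ContDiffOn.differentiableAt_mul_deriv (hφ : ContDiffOn ℝ n φ s) (hn : 2 ≤ n)
    (hs : IsOpen s) (hr : r ∈ s) : DifferentiableAt ℝ (fun x => x * deriv φ x) r :=
  have hφ' : ContDiffOn ℝ 1 (deriv φ) s :=
    hφ.deriv_of_isOpen hs (by simpa [one_add_one_eq_two] using hn)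
  differentiableAt_id.mul <| (hφ'.differentiableOn one_ne_zero).differentiableAt (hs.mem_nhds hr)

end

theorem tendsto_mul_deriv_nhdsGT_zero_and_integral_eq {φ f : ℝ → ℝ} {N C β : ℝ}
    (hφ : ContDiffOn ℝ 2 φ (Ioi 0))
    (hODE : ∀ r > (0 : ℝ), deriv (fun s => s * deriv φ s) r = -f r)
    (hf : IntegrableOn f (Ioi 0)) (hC : ∀ᶠ r in 𝓝[>] 0, |φ r - N * log r| ≤ C)
    (hβ : Tendsto (fun r => r * deriv φ r) atTop (𝓝 β)) :
    Tendsto (fun r => r * deriv φ r) (𝓝[>] 0) (𝓝 N) ∧ ∫ r in Ioi 0, f r = N - β := by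
  have hflux : ∀ r > (0 : ℝ), HasDerivAt (fun s => s * deriv φ s) (-f r) r := fun r hr =>
    hODE r hr ▸ (hφ.differentiableAt_mul_deriv le_rfl isOpen_Ioi hr).hasDerivAt
  have hlim := tendsto_nhdsGT_zero_of_hasDerivAt_of_integrableOn hflux hf.neg hβ
  rw [integral_neg, sub_neg_eq_add] at hlim
  have hN : β + ∫ r in Ioi 0, f r = N := eq_of_tendsto_mul_deriv_of_abs_sub_mul_log_le
    (eventually_mem_nhdsWithin.mono fun r hr => hφ.hasDerivAt_deriv two_ne_zero isOpen_Ioi hr)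
    hC hlim
  exact ⟨hN ▸ hlim, by linarith⟩

theorem hasDerivAt_pohozaev {u v : ℝ → ℝ}
    (hu : ContDiffOn ℝ 2 u (Ioi 0)) (hv : ContDiffOn ℝ 2 v (Ioi 0))
    (hODEu : ∀ r > (0 : ℝ),
      deriv (fun s => s * deriv u s) r = -(r * exp (v r) * (exp (u r) + 1)))
    (hODEv : ∀ r > (0 : ℝ),
      deriv (fun s => s * deriv v s) r = -(r * exp (u r) * (exp (v r) - 1)))
    {r : ℝ} (hr : 0 < r) :
    HasDerivAt (fun s => s * deriv u s * (s * deriv v s)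
        + s ^ 2 * (exp (u s + v s) + exp (v s) - exp (u s)))
      (2 * r * (exp (u r + v r) + exp (v r) - exp (u r))) r := by
  have hu' := hu.hasDerivAt_deriv two_ne_zero isOpen_Ioi hr
  have hv' := hv.hasDerivAt_deriv two_ne_zero isOpen_Ioi hr
  have hwu := hODEu r hr ▸ (hu.differentiableAt_mul_deriv le_rfl isOpen_Ioi hr).hasDerivAt
  have hwv := hODEv r hr ▸ (hv.differentiableAt_mul_deriv le_rfl isOpen_Ioi hr).hasDerivAt
  refine ((hwu.mul hwv).add ((hasDerivAt_pow 2 r).mul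
    (((hu'.add hv').exp.add hv'.exp).sub hu'.exp))).congr_deriv ?_
  simp only [Pi.add_apply, Pi.sub_apply, exp_add]
  push_cast
  ring

theorem tendsto_sq_mul_exp_sub_of_tendsto_sq_mul_exp_add {u v : ℝ → ℝ} {l : Filter ℝ}
    (h : Tendsto (fun r => r ^ 2 * (exp (u r + v r) + exp (v r) + exp (u r))) l (𝓝 0)) :
    Tendsto (fun r => r ^ 2 * (exp (u r + v r) + exp (v r) - exp (u r))) l (𝓝 0) := by
  refine squeeze_zero_norm (fun r => ?_) h
  rw [norm_mul, norm_of_nonneg (sq_nonneg r)]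
  gcongr
  rw [norm_eq_abs, abs_le]
  constructor <;> linarith [exp_pos (u r), exp_pos (v r), exp_pos (u r + v r)]

theorem eventually_le_of_abs_sub_mul_log_le {φ : ℝ → ℝ} {N C : ℝ} (hN : 0 ≤ N)
    (hC : ∀ᶠ r in 𝓝[>] 0, |φ r - N * log r| ≤ C) : ∀ᶠ r in 𝓝[>] 0, φ r ≤ C := by
  filter_upwards [hC, Ioo_mem_nhdsGT one_pos] with r hr ⟨hr0, hr1⟩
  nlinarith [(abs_le.mp hr).2, log_nonpos hr0.le hr1.le]

theorem tendsto_sq_mul_nhdsGT_zero_of_eventually_le {g : ℝ → ℝ} {M : ℝ}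
    (hg0 : ∀ r, 0 ≤ g r) (hg : ∀ᶠ r in 𝓝[>] 0, g r ≤ M) :
    Tendsto (fun r => r ^ 2 * g r) (𝓝[>] 0) (𝓝 0) := by
  have hM : Tendsto (fun r : ℝ => r ^ 2 * M) (𝓝[>] 0) (𝓝 0) :=
    tendsto_nhdsWithin_of_tendsto_nhds <|
      (by fun_prop : Continuous fun r : ℝ => r ^ 2 * M).tendsto' 0 0 (by simp)
  refine squeeze_zero' (Eventually.of_forall fun r => by have := hg0 r; positivity) ?_ hM
  filter_upwards [hg] with r hr
  gcongr

theorem tendsto_sq_mul_exp_nhdsGT_zero {u v : ℝ → ℝ} {N₁ N₂ C₁ C₂ : ℝ} (hN₁ : 0 ≤ N₁)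
    (hN₂ : 0 ≤ N₂) (hC₁ : ∀ᶠ r in 𝓝[>] 0, |u r - N₁ * log r| ≤ C₁)
    (hC₂ : ∀ᶠ r in 𝓝[>] 0, |v r - N₂ * log r| ≤ C₂) :
    Tendsto (fun r => r ^ 2 * (exp (u r + v r) + exp (v r) + exp (u r))) (𝓝[>] 0) (𝓝 0) := by
  refine tendsto_sq_mul_nhdsGT_zero_of_eventually_le (M := exp (C₁ + C₂) + exp C₂ + exp C₁)
    (fun r => by positivity) ?_
  filter_upwards [eventually_le_of_abs_sub_mul_log_le hN₁ hC₁,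
    eventually_le_of_abs_sub_mul_log_le hN₂ hC₂] with r hur hvr
  gcongr

theorem integral_pohozaev_eq {u v : ℝ → ℝ} {a₁ a₂ b₁ b₂ : ℝ}
    (hu : ContDiffOn ℝ 2 u (Ioi 0)) (hv : ContDiffOn ℝ 2 v (Ioi 0))
    (hODEu : ∀ r > (0 : ℝ),
      deriv (fun s => s * deriv u s) r = -(r * exp (v r) * (exp (u r) + 1)))
    (hODEv : ∀ r > (0 : ℝ),
      deriv (fun s => s * deriv v s) r = -(r * exp (u r) * (exp (v r) - 1)))
    (hint : IntegrableOn (fun r => 2 * r * (exp (u r + v r) + exp (v r) - exp (u r))) (Ioi 0))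
    (hwu₀ : Tendsto (fun r => r * deriv u r) (𝓝[>] 0) (𝓝 a₁))
    (hwv₀ : Tendsto (fun r => r * deriv v r) (𝓝[>] 0) (𝓝 a₂))
    (hdecay₀ : Tendsto (fun r => r ^ 2 * (exp (u r + v r) + exp (v r) + exp (u r)))
      (𝓝[>] 0) (𝓝 0))
    (hwu : Tendsto (fun r => r * deriv u r) atTop (𝓝 b₁))
    (hwv : Tendsto (fun r => r * deriv v r) atTop (𝓝 b₂))
    (hdecay : Tendsto (fun r => r ^ 2 * (exp (u r + v r) + exp (v r) + exp (u r)))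
      atTop (𝓝 0)) :
    ∫ r in Ioi 0, 2 * r * (exp (u r + v r) + exp (v r) - exp (u r)) = b₁ * b₂ - a₁ * a₂ := by
  have hP₀ := tendsto_nhdsGT_zero_of_hasDerivAt_of_integrableOn
    (fun r hr => hasDerivAt_pohozaev hu hv hODEu hODEv hr) hint
    ((hwu.mul hwv).add (tendsto_sq_mul_exp_sub_of_tendsto_sq_mul_exp_add hdecay))
  have := tendsto_nhds_unique hP₀
    ((hwu₀.mul hwv₀).add (tendsto_sq_mul_exp_sub_of_tendsto_sq_mul_exp_add hdecay₀))
  linarith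

theorem stmt13_general (N₁ N₂ : ℕ) (β₁ β₂ : ℝ) (u v : ℝ → ℝ)
    (hu : ContDiffOn ℝ 2 u (Set.Ioi 0)) (hv : ContDiffOn ℝ 2 v (Set.Ioi 0))
    (hODEu : ∀ r > (0 : ℝ),
      deriv (fun s => s * deriv u s) r = -(r * Real.exp (v r) * (Real.exp (u r) + 1)))
    (hODEv : ∀ r > (0 : ℝ),
      deriv (fun s => s * deriv v s) r = -(r * Real.exp (u r) * (Real.exp (v r) - 1)))
    (hu0 : ∃ C ε, 0 < ε ∧ ∀ r ∈ Set.Ioo (0 : ℝ) ε, |u r - 2 * N₁ * Real.log r| ≤ C)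
    (hv0 : ∃ C ε, 0 < ε ∧ ∀ r ∈ Set.Ioo (0 : ℝ) ε, |v r - 2 * N₂ * Real.log r| ≤ C)
    (hintu : IntegrableOn (fun t => t * Real.exp (u t)) (Set.Ioi 0))
    (hintv : IntegrableOn (fun t => t * Real.exp (v t)) (Set.Ioi 0))
    (hintuv : IntegrableOn (fun t => t * Real.exp (u t + v t)) (Set.Ioi 0))
    (hlimu : Tendsto (fun r => r * deriv u r) atTop (nhds (-2 * β₁)))
    (hlimv : Tendsto (fun r => r * deriv v r) atTop (nhds (-2 * β₂)))
    (hdecay : Tendsto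
      (fun r => r ^ 2 * (Real.exp (u r + v r) + Real.exp (v r) + Real.exp (u r)))
      atTop (nhds 0)) :
    2 * (∫ t in Set.Ioi (0 : ℝ), t * Real.exp (u t + v t))
        = 4 * (N₁ + 1) * (N₂ + 1) - 4 * (β₁ - 1) * (β₂ - 1) ∧
    2 * (∫ t in Set.Ioi (0 : ℝ), t * Real.exp (u t))
        = 4 * N₁ * (N₂ + 1) - 4 * β₁ * (β₂ - 1) ∧
    2 * (∫ t in Set.Ioi (0 : ℝ), t * Real.exp (v t))
        = 4 * β₂ * (β₁ - 1) - 4 * N₂ * (N₁ + 1) := by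
  obtain ⟨C₁, ε₁, hε₁, hC₁⟩ := hu0
  obtain ⟨C₂, ε₂, hε₂, hC₂⟩ := hv0
  replace hC₁ := eventually_of_mem (Ioo_mem_nhdsGT hε₁) hC₁
  replace hC₂ := eventually_of_mem (Ioo_mem_nhdsGT hε₂) hC₂
  have hsrc_u : EqOn (fun t => t * exp (u t + v t) + t * exp (v t))
      (fun r => r * exp (v r) * (exp (u r) + 1)) (Ioi 0) := fun t _ => by
    simp only [exp_add]; ring
  have hsrc_v : EqOn (fun t => t * exp (u t + v t) - t * exp (u t))
      (fun r => r * exp (u r) * (exp (v r) - 1)) (Ioi 0) := fun t _ => by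
    simp only [exp_add]; ring
  have hint_sum : IntegrableOn (fun t => t * exp (u t + v t) + t * exp (v t)) (Ioi 0) :=
    hintuv.add hintv
  obtain ⟨hwu, hIu⟩ := tendsto_mul_deriv_nhdsGT_zero_and_integral_eq hu hODEu
    (hint_sum.congr_fun hsrc_u measurableSet_Ioi) hC₁ hlimu
  obtain ⟨hwv, hIv⟩ := tendsto_mul_deriv_nhdsGT_zero_and_integral_eq hv hODEv
    ((hintuv.sub hintu).congr_fun hsrc_v measurableSet_Ioi) hC₂ hlimv
  rw [← setIntegral_congr_fun measurableSet_Ioi hsrc_u, integral_add hintuv hintv] at hIu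
  rw [← setIntegral_congr_fun measurableSet_Ioi hsrc_v, integral_sub hintuv hintu] at hIv
  have hsrc_P : EqOn (fun t => 2 * (t * exp (u t + v t) + t * exp (v t) - t * exp (u t)))
      (fun r => 2 * r * (exp (u r + v r) + exp (v r) - exp (u r))) (Ioi 0) := fun t _ => by
    ring
  have hP := integral_pohozaev_eq hu hv hODEu hODEv
    (IntegrableOn.congr_fun ((hint_sum.sub hintu).const_mul 2) hsrc_P measurableSet_Ioi) hwu hwv
    (tendsto_sq_mul_exp_nhdsGT_zero (by positivity) (by positivity) hC₁ hC₂) hlimu hlimv hdecay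
  rw [← setIntegral_congr_fun measurableSet_Ioi hsrc_P, integral_const_mul,
    integral_sub hint_sum hintu, integral_add hintuv hintv] at hP
  refine ⟨by linear_combination 2 * hIu + 2 * hIv - hP, by linear_combination 2 * hIu - hP,
    by linear_combination -2 * hIv + hP⟩

theorem stmt13 (N₁ N₂ : ℕ) (β₁ β₂ : ℝ) (hβ₁ : 0 < β₁) (hβ₂ : 0 < β₂) (u v : ℝ → ℝ)
    (hu : ContDiffOn ℝ 2 u (Set.Ioi 0)) (hv : ContDiffOn ℝ 2 v (Set.Ioi 0))
    (hODEu : ∀ r > (0 : ℝ),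
      deriv (fun s => s * deriv u s) r = -(r * Real.exp (v r) * (Real.exp (u r) + 1)))
    (hODEv : ∀ r > (0 : ℝ),
      deriv (fun s => s * deriv v s) r = -(r * Real.exp (u r) * (Real.exp (v r) - 1)))
    (hu0 : ∃ C ε, 0 < ε ∧ ∀ r ∈ Set.Ioo (0 : ℝ) ε, |u r - 2 * N₁ * Real.log r| ≤ C)
    (hv0 : ∃ C ε, 0 < ε ∧ ∀ r ∈ Set.Ioo (0 : ℝ) ε, |v r - 2 * N₂ * Real.log r| ≤ C)
    (hintu : IntegrableOn (fun t => t * Real.exp (u t)) (Set.Ioi 0))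
    (hintv : IntegrableOn (fun t => t * Real.exp (v t)) (Set.Ioi 0))
    (hintuv : IntegrableOn (fun t => t * Real.exp (u t + v t)) (Set.Ioi 0))
    (hlimu : Tendsto (fun r => r * deriv u r) atTop (nhds (-2 * β₁)))
    (hlimv : Tendsto (fun r => r * deriv v r) atTop (nhds (-2 * β₂)))
    (hdecay : Tendsto
      (fun r => r ^ 2 * (Real.exp (u r + v r) + Real.exp (v r) + Real.exp (u r)))
      atTop (nhds 0)) :
    2 * (∫ t in Set.Ioi (0 : ℝ), t * Real.exp (u t + v t))
        = 4 * (N₁ + 1) * (N₂ + 1) - 4 * (β₁ - 1) * (β₂ - 1) ∧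
    2 * (∫ t in Set.Ioi (0 : ℝ), t * Real.exp (u t))
        = 4 * N₁ * (N₂ + 1) - 4 * β₁ * (β₂ - 1) ∧
    2 * (∫ t in Set.Ioi (0 : ℝ), t * Real.exp (v t))
        = 4 * β₂ * (β₁ - 1) - 4 * N₂ * (N₁ + 1) :=
  stmt13_general N₁ N₂ β₁ β₂ u v hu hv hODEu hODEv hu0 hv0 hintu hintv hintuv hlimu hlimv hdecay
end

section
/- There exist no τ₁ < τ₂ in (0,∞) such that a finite-energy radial solution (u,v) satisfies F₂(τ₁) = F₂(τ₂) = 2N₂ with v(τ₂) < 0 < v(τ₁) and v strictly decreasing on (τ₁, τ₂), where F₂(r) = ∫₀^r t e^{u}(e^{v}-1) dt. (Non-oscillation of v.) -/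
/-!
Since `v - 2 N₂ log r` is bounded near `0`, the flux `r v'(r)` tends to `2 N₂` as `r → 0`;
integrating `(r v')' = -r e^u (e^v - 1)` from `0` to `τ`, the condition `F₂(τ) = 2 N₂` therefore
forces `τ v'(τ) = 0`, both at `τ₁` and at `τ₂`.

The Pohozaev function `P = (r u')(r v') + r² (e^{u+v} + e^v - e^u)` has
`P' = 2r (e^{u+v} + e^v - e^u)`, so `P + 2 r v' - e^{v(τ₂)} r²` has derivative
`2r (e^v - e^{v(τ₂)}) ≥ 0` on `[τ₁, τ₂]`, where `v ≥ v(τ₂)`. Its values at `τ₁` and `τ₂`, where the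
flux terms vanish, give `τ₁² (e^u (e^v - 1) + e^v - e^{v(τ₂)})(τ₁) ≤ τ₂² (e^u (e^v - 1))(τ₂)`,
whose left side is positive and right side negative because `v(τ₂) < 0 < v(τ₁)`.
-/

open MeasureTheory Real intervalIntegral

open Set Filter Topology

theorem ContDiffOn.hasDerivAt_deriv_s15 {f : ℝ → ℝ} {U : Set ℝ} {n : WithTop ℕ∞}
    (hf : ContDiffOn ℝ n f U) (hU : IsOpen U) (hn : n ≠ 0) {r : ℝ} (hr : r ∈ U) :
    HasDerivAt f (deriv f r) r :=
  ((hf.differentiableOn hn).differentiableAt (hU.mem_nhds hr)).hasDerivAt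

theorem ContDiffOn.hasDerivAt_mul_deriv {f : ℝ → ℝ} {U : Set ℝ} (hf : ContDiffOn ℝ 2 f U)
    (hU : IsOpen U) {r : ℝ} (hr : r ∈ U) :
    HasDerivAt (fun s => s * deriv f s) (deriv (fun s => s * deriv f s) r) r :=
  (contDiffOn_id.mul (hf.deriv_of_isOpen hU le_rfl)).hasDerivAt_deriv_s15 hU one_ne_zero hr

theorem tendsto_atBot_of_tendsto_mul_deriv_pos {f f' : ℝ → ℝ} {L : ℝ} (hL : 0 < L)
    (hf : ∀ᶠ r in 𝓝[>] 0, HasDerivAt f (f' r) r)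
    (hlim : Tendsto (fun r => r * f' r) (𝓝[>] 0) (𝓝 L)) :
    Tendsto f (𝓝[>] 0) atBot := by
  obtain ⟨δ, hδ, hsub⟩ := mem_nhdsGT_iff_exists_Ioo_subset.mp
    (hf.and (hlim.eventually (lt_mem_nhds (half_lt_self hL))))
  have hmono : MonotoneOn (fun r => f r - L / 2 * log r) (Ioo 0 δ) := by
    have hderiv : ∀ r ∈ Ioo 0 δ,
        HasDerivAt (fun r => f r - L / 2 * log r) (f' r - L / 2 * r⁻¹) r := fun r hr =>
      (hsub hr).1.sub ((hasDerivAt_log hr.1.ne').const_mul _)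
    refine monotoneOn_of_hasDerivWithinAt_nonneg (f' := fun r => f' r - L / 2 * r⁻¹)
      (convex_Ioo 0 δ) (fun r hr => (hderiv r hr).continuousAt.continuousWithinAt) ?_ ?_
    · exact fun r hr => (hderiv r (interior_subset hr)).hasDerivWithinAt
    · intro r hr
      rw [interior_Ioo] at hr
      have := (hsub hr).2
      rw [sub_nonneg, ← div_eq_mul_inv, div_le_iff₀ hr.1]
      linarith
  have hr₀ : δ / 2 ∈ Ioo 0 δ := ⟨half_pos hδ, half_lt_self hδ⟩
  have hle : ∀ᶠ r in 𝓝[>] (0 : ℝ), f r ≤ L / 2 * log r + (f (δ / 2) - L / 2 * log (δ / 2)) := by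
    filter_upwards [Ioo_mem_nhdsGT hr₀.1] with r hr
    have := hmono ⟨hr.1, hr.2.trans hr₀.2⟩ hr₀ hr.2.le
    dsimp only at this
    linarith
  exact tendsto_atBot_mono' _ hle
    (tendsto_atBot_add_const_right _ _ (tendsto_log_nhdsGT_zero.const_mul_atBot (half_pos hL)))

theorem eq_of_tendsto_mul_deriv_of_abs_sub_log_le {f f' : ℝ → ℝ} {a L : ℝ}
    (hf : ∀ᶠ r in 𝓝[>] 0, HasDerivAt f (f' r) r)
    (hlim : Tendsto (fun r => r * f' r) (𝓝[>] 0) (𝓝 L))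
    (hbdd : ∃ C ε, 0 < ε ∧ ∀ r ∈ Ioo (0 : ℝ) ε, |f r - a * log r| ≤ C) : L = a := by
  obtain ⟨C, ε, hε, hC⟩ := hbdd
  set w := fun r => f r - a * log r
  have hw_bdd : ∀ᶠ r in 𝓝[>] (0 : ℝ), |w r| ≤ C := by
    filter_upwards [Ioo_mem_nhdsGT hε] with r hr using hC r hr
  have hw : ∀ᶠ r in 𝓝[>] (0 : ℝ), HasDerivAt w (f' r - a * r⁻¹) r := by
    filter_upwards [hf, self_mem_nhdsWithin] with r hr hr₀
    exact hr.sub ((hasDerivAt_log (ne_of_gt hr₀)).const_mul a)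
  have hw_lim : Tendsto (fun r => r * (f' r - a * r⁻¹)) (𝓝[>] 0) (𝓝 (L - a)) := by
    refine (hlim.sub_const a).congr' ?_
    filter_upwards [self_mem_nhdsWithin] with r hr
    field_simp [(mem_Ioi.mp hr).ne']
  rcases lt_trichotomy L a with hlt | heq | hgt
  · have := tendsto_atBot_of_tendsto_mul_deriv_pos (f := fun r => -w r)
      (neg_pos.mpr (sub_neg.mpr hlt)) (hw.mono fun r hr => hr.neg) (by simpa only [mul_neg] using hw_lim.neg)
    obtain ⟨r, hr, hr'⟩ := ((this.eventually (eventually_lt_atBot (-C))).and hw_bdd).exists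
    linarith [le_abs_self (w r)]
  · exact heq
  · have := tendsto_atBot_of_tendsto_mul_deriv_pos (sub_pos.mpr hgt) hw hw_lim
    obtain ⟨r, hr, hr'⟩ := ((this.eventually (eventually_lt_atBot (-C))).and hw_bdd).exists
    linarith [neg_abs_le (w r)]

theorem mul_deriv_eq_zero_of_integral_eq {f h : ℝ → ℝ} {a τ : ℝ} (hf : ContDiffOn ℝ 2 f (Ioi 0))
    (hODE : ∀ r > (0 : ℝ), deriv (fun s => s * deriv f s) r = -h r)
    (hbdd : ∃ C ε, 0 < ε ∧ ∀ r ∈ Ioo (0 : ℝ) ε, |f r - a * log r| ≤ C)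
    (hτ : 0 < τ) (hh : IntegrableOn h (Ioc 0 τ)) (hint : ∫ t in (0 : ℝ)..τ, h t = a) :
    τ * deriv f τ = 0 := by
  have hii : ∀ x y, 0 ≤ x → x ≤ y → y ≤ τ → IntervalIntegrable h volume x y := fun x y hx hxy hy =>
    (intervalIntegrable_iff_integrableOn_Ioc_of_le hxy).mpr (hh.mono_set (Ioc_subset_Ioc hx hy))
  have hflux : ∀ x ∈ Ioo 0 τ, x * deriv f x = τ * deriv f τ + a - ∫ t in (0 : ℝ)..x, h t := by
    intro x hx
    have hftc := integral_eq_sub_of_hasDerivAt (f := fun s => s * deriv f s) (f' := fun t => -h t)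
      (fun t ht => by
        have ht₀ : 0 < t := hx.1.trans_le (uIcc_of_le hx.2.le ▸ ht).1
        simpa only [hODE t ht₀] using hf.hasDerivAt_mul_deriv isOpen_Ioi ht₀)
      (hii x τ hx.1.le hx.2.le le_rfl).neg
    rw [intervalIntegral.integral_neg,
      ← integral_interval_sub_left (hii 0 τ le_rfl hτ.le le_rfl) (hii 0 x le_rfl hx.1.le hx.2.le),
      hint] at hftc
    linarith
  have hprim : Tendsto (fun x => ∫ t in (0 : ℝ)..x, h t) (𝓝[>] 0) (𝓝 0) := by
    have := continuousWithinAt_primitive (a := 0) (b₀ := 0) (b₁ := 0) (b₂ := τ) (μ := volume)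
      Real.volume_singleton (by simpa [hτ.le] using hii 0 τ le_rfl hτ.le le_rfl)
    rw [ContinuousWithinAt, integral_same] at this
    exact this.mono_left (nhdsWithin_Ioc_eq_nhdsGT hτ ▸ nhdsWithin_mono _ Ioc_subset_Icc_self)
  have hlim : Tendsto (fun x => x * deriv f x) (𝓝[>] 0) (𝓝 (τ * deriv f τ + a)) := by
    refine (by simpa using tendsto_const_nhds.sub hprim :
      Tendsto (fun x => τ * deriv f τ + a - ∫ t in (0 : ℝ)..x, h t) _ _).congr' ?_
    filter_upwards [Ioo_mem_nhdsGT hτ] with x hx using (hflux x hx).symm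
  have hderiv : ∀ᶠ r in 𝓝[>] (0 : ℝ), HasDerivAt f (deriv f r) r := by
    filter_upwards [self_mem_nhdsWithin] with r hr using hf.hasDerivAt_deriv_s15 isOpen_Ioi two_ne_zero hr
  linarith [eq_of_tendsto_mul_deriv_of_abs_sub_log_le hderiv hlim hbdd]

noncomputable def pohozaev (u v : ℝ → ℝ) (r : ℝ) : ℝ :=
  r * deriv u r * (r * deriv v r) + r ^ 2 * (exp (u r + v r) + exp (v r) - exp (u r))

section Pohozaev

variable {u v : ℝ → ℝ} (hu : ContDiffOn ℝ 2 u (Ioi 0)) (hv : ContDiffOn ℝ 2 v (Ioi 0))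
  (hODEu : ∀ r > (0 : ℝ),
    deriv (fun s => s * deriv u s) r = -(r * exp (v r) * (exp (u r) + 1)))
  (hODEv : ∀ r > (0 : ℝ),
    deriv (fun s => s * deriv v s) r = -(r * exp (u r) * (exp (v r) - 1)))
include hu hv hODEu hODEv

theorem hasDerivAt_pohozaev_s15 {r : ℝ} (hr : 0 < r) :
    HasDerivAt (pohozaev u v) (2 * r * (exp (u r + v r) + exp (v r) - exp (u r))) r := by
  have hu' := hu.hasDerivAt_deriv_s15 isOpen_Ioi two_ne_zero hr
  have hv' := hv.hasDerivAt_deriv_s15 isOpen_Ioi two_ne_zero hr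
  have hU := hu.hasDerivAt_mul_deriv isOpen_Ioi hr
  have hV := hv.hasDerivAt_mul_deriv isOpen_Ioi hr
  rw [hODEu r hr] at hU
  rw [hODEv r hr] at hV
  refine (hU.mul hV |>.add <| (hasDerivAt_pow 2 r).mul
    ((((hu'.add hv').exp).add hv'.exp).sub hu'.exp)).congr_deriv ?_
  simp only [Pi.add_apply, Pi.sub_apply, exp_add]
  ring

theorem monotoneOn_pohozaev_add_two_mul_deriv_sub {a b m : ℝ} (ha : 0 < a)
    (hm : ∀ r ∈ Ioo a b, m ≤ v r) :
    MonotoneOn (fun s => pohozaev u v s + 2 * (s * deriv v s) - exp m * s ^ 2) (Icc a b) := by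
  have hderiv : ∀ r ∈ Icc a b, HasDerivAt
      (fun s => pohozaev u v s + 2 * (s * deriv v s) - exp m * s ^ 2)
      (2 * r * (exp (v r) - exp m)) r := by
    intro r hr
    have hr₀ : 0 < r := ha.trans_le hr.1
    have hV := hv.hasDerivAt_mul_deriv isOpen_Ioi hr₀
    rw [hODEv r hr₀] at hV
    refine ((hasDerivAt_pohozaev_s15 hu hv hODEu hODEv hr₀).add (hV.const_mul 2) |>.sub
      ((hasDerivAt_pow 2 r).const_mul _)).congr_deriv ?_
    simp only [exp_add]
    ring
  refine monotoneOn_of_hasDerivWithinAt_nonneg (convex_Icc a b)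
    (fun r hr => (hderiv r hr).continuousAt.continuousWithinAt)
    (fun r hr => (hderiv r (interior_subset hr)).hasDerivWithinAt) fun r hr => ?_
  rw [interior_Icc] at hr
  have := exp_le_exp.mpr (hm r hr)
  have : 0 < r := ha.trans hr.1
  positivity

end Pohozaev

theorem stmt15_general (N₂ : ℕ) (u v : ℝ → ℝ)
    (hu : ContDiffOn ℝ 2 u (Set.Ioi 0)) (hv : ContDiffOn ℝ 2 v (Set.Ioi 0))
    (hODEu : ∀ r > (0 : ℝ),
      deriv (fun s => s * deriv u s) r = -(r * Real.exp (v r) * (Real.exp (u r) + 1)))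
    (hODEv : ∀ r > (0 : ℝ),
      deriv (fun s => s * deriv v s) r = -(r * Real.exp (u r) * (Real.exp (v r) - 1)))
    (hv0 : ∃ C ε, 0 < ε ∧ ∀ r ∈ Set.Ioo (0 : ℝ) ε, |v r - 2 * N₂ * Real.log r| ≤ C)
    (hintu : IntegrableOn (fun t => t * Real.exp (u t)) (Set.Ioi 0))
    (hintuv : IntegrableOn (fun t => t * Real.exp (u t + v t)) (Set.Ioi 0)) :
    ¬ ∃ τ₁ τ₂ : ℝ, 0 < τ₁ ∧ τ₁ < τ₂ ∧
      (∫ t in (0 : ℝ)..τ₁, t * Real.exp (u t) * (Real.exp (v t) - 1)) = 2 * N₂ ∧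
      (∫ t in (0 : ℝ)..τ₂, t * Real.exp (u t) * (Real.exp (v t) - 1)) = 2 * N₂ ∧
      v τ₂ < 0 ∧ 0 < v τ₁ ∧ StrictAntiOn v (Set.Ioo τ₁ τ₂) := by
  rintro ⟨τ₁, τ₂, hτ₁, hτ₁₂, hF₁, hF₂, hvτ₂, hvτ₁, hanti⟩
  have hτ₂ : 0 < τ₂ := hτ₁.trans hτ₁₂
  have hg : IntegrableOn (fun t => t * exp (u t) * (exp (v t) - 1)) (Ioi 0) :=
    (hintuv.sub hintu).congr_fun (fun t _ => by simp only [Pi.sub_apply, exp_add]; ring)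
      measurableSet_Ioi
  have hflux : ∀ τ > 0, ∫ t in (0 : ℝ)..τ, t * exp (u t) * (exp (v t) - 1) = 2 * N₂ →
      τ * deriv v τ = 0 := fun τ hτ hF =>
    mul_deriv_eq_zero_of_integral_eq hv hODEv hv0 hτ (hg.mono_set Ioc_subset_Ioi_self) hF
  have hvτ₂_le : ∀ r ∈ Ioo τ₁ τ₂, v τ₂ ≤ v r := fun r hr =>
    ContinuousWithinAt.closure_le (closure_Ioo hr.2.ne ▸ right_mem_Icc.mpr hr.2.le)
      (hv.continuousOn.continuousAt (isOpen_Ioi.mem_nhds hτ₂)).continuousWithinAt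
      continuousWithinAt_const fun s hs => (hanti hr ⟨hr.1.trans hs.1, hs.2⟩ hs.1).le
  have hmono := monotoneOn_pohozaev_add_two_mul_deriv_sub hu hv hODEu hODEv hτ₁ hvτ₂_le
    (left_mem_Icc.mpr hτ₁₂.le) (right_mem_Icc.mpr hτ₁₂.le) hτ₁₂.le
  simp only [pohozaev, hflux τ₁ hτ₁ hF₁, hflux τ₂ hτ₂ hF₂, exp_add] at hmono
  have hexp₁ : 1 < exp (v τ₁) := one_lt_exp_iff.mpr hvτ₁
  have hexp₂ : exp (v τ₂) < 1 := exp_lt_one_iff.mpr hvτ₂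
  have hlhs : 0 < τ₁ ^ 2 * (exp (u τ₁) * (exp (v τ₁) - 1) + (exp (v τ₁) - exp (v τ₂))) := by
    have := exp_pos (u τ₁)
    have := sub_pos.mpr hexp₁
    have := sub_pos.mpr (hexp₂.trans hexp₁)
    positivity
  have hrhs : τ₂ ^ 2 * (exp (u τ₂) * (exp (v τ₂) - 1)) < 0 :=
    mul_neg_of_pos_of_neg (by positivity) (mul_neg_of_pos_of_neg (exp_pos _) (sub_neg.mpr hexp₂))
  linarith

theorem stmt15 (N₁ N₂ : ℕ) (u v : ℝ → ℝ)
    (hu : ContDiffOn ℝ 2 u (Set.Ioi 0)) (hv : ContDiffOn ℝ 2 v (Set.Ioi 0))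
    (hODEu : ∀ r > (0 : ℝ),
      deriv (fun s => s * deriv u s) r = -(r * Real.exp (v r) * (Real.exp (u r) + 1)))
    (hODEv : ∀ r > (0 : ℝ),
      deriv (fun s => s * deriv v s) r = -(r * Real.exp (u r) * (Real.exp (v r) - 1)))
    (hu0 : ∃ C ε, 0 < ε ∧ ∀ r ∈ Set.Ioo (0 : ℝ) ε, |u r - 2 * N₁ * Real.log r| ≤ C)
    (hv0 : ∃ C ε, 0 < ε ∧ ∀ r ∈ Set.Ioo (0 : ℝ) ε, |v r - 2 * N₂ * Real.log r| ≤ C)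
    (hintu : IntegrableOn (fun t => t * Real.exp (u t)) (Set.Ioi 0))
    (hintv : IntegrableOn (fun t => t * Real.exp (v t)) (Set.Ioi 0))
    (hintuv : IntegrableOn (fun t => t * Real.exp (u t + v t)) (Set.Ioi 0)) :
    ¬ ∃ τ₁ τ₂ : ℝ, 0 < τ₁ ∧ τ₁ < τ₂ ∧
      (∫ t in (0 : ℝ)..τ₁, t * Real.exp (u t) * (Real.exp (v t) - 1)) = 2 * N₂ ∧
      (∫ t in (0 : ℝ)..τ₂, t * Real.exp (u t) * (Real.exp (v t) - 1)) = 2 * N₂ ∧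
      v τ₂ < 0 ∧ 0 < v τ₁ ∧ StrictAntiOn v (Set.Ioo τ₁ τ₂) :=
  stmt15_general N₂ u v hu hv hODEu hODEv hv0 hintu hintuv
end
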